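/- arXiv:2310.05385 — 3 statements merged into one kernel-verified Lean document; each statement's English description precedes it below -/
import Mathlib

section
/- If a signed hypergraph H = (V, E⁺, E⁻) is signed-acyclic, then for every vertex x ∈ V, the signed hypergraph obtained by removing x from every hyperedge (in both E⁺ and E⁻) is also signed-acyclic. -/
variable {V : Type*}

/-- A join tree of a hypergraph with hyperedge collection `E`: a tree (acyclic,
preconnected graph) on the hyperedges such that for every vertex `v`, the set of
nodes whose hyperedges contain `v` induces a connected (preconnected) subgraph. -/
def IsJoinTree (E : Set (Set V)) (T : SimpleGraph E) : Prop :=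
  T.IsAcyclic ∧ T.Preconnected ∧
    ∀ v : V, (T.induce {K : ↥E | v ∈ (K : Set V)}).Preconnected

/-- A hypergraph is α-acyclic if it admits a join tree. -/
def AlphaAcyclic (E : Set (Set V)) : Prop :=
  ∃ T : SimpleGraph E, IsJoinTree E T

/-- Remove a vertex from every hyperedge, discarding emptied hyperedges. -/
def removeVertex (E : Set (Set V)) (x : V) : Set (Set V) :=
  {K' | ∃ K ∈ E, K' = K \ {x} ∧ K' ≠ ∅}

/-- A signed hypergraph `(V, E⁺, E⁻)` is signed-acyclic if for every `S ⊆ E⁻`,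
the hypergraph `(V, E⁺ ∪ S)` is α-acyclic. -/
def SignedAcyclic (Ep En : Set (Set V)) : Prop :=
  ∀ S ⊆ En, AlphaAcyclic (Ep ∪ S)

/-!
Root a join tree `T` of `E` at a hyperedge `R₀` that survives the removal of `x`. A hyperedge
`K'` of the new hypergraph is represented by its preimage `K` closest to the root, and its new
parent is the image of the nearest proper ancestor of `K` that survives (only `∅` and `{x}` do
not). Distances to `R₀` strictly decrease along new parents, so the graph of new parents is a
tree. If `v` lies in two distinct new hyperedges, connectivity of the `v`-subtree of `T` puts `v`
into the tree parent of the deeper representative; that parent therefore survives and is the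
new parent, which gives the join-tree property.

Signed acyclicity reduces to this: every `S ⊆ removeVertex En x` is the image of some
`S₀ ⊆ En`, and removing a vertex commutes with unions.
-/

namespace SimpleGraph

variable {β : Type*} {T : SimpleGraph β}

lemma Reachable.exists_isPath_of_induce {S : Set β} {a b : β} {ha : a ∈ S} {hb : b ∈ S}
    (h : (T.induce S).Reachable ⟨a, ha⟩ ⟨b, hb⟩) :
    ∃ q : T.Walk a b, q.IsPath ∧ ∀ w ∈ q.support, w ∈ S := by
  classical
  obtain ⟨qS⟩ := h
  let q := qS.toPath.1.map (Embedding.induce (G := T) S).toHom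
  have hqS : ∀ w ∈ q.support, w ∈ S := by
    simp only [q, Walk.support_map, List.mem_map]
    rintro _ ⟨w, -, rfl⟩
    exact w.2
  exact ⟨q, qS.toPath.2.map (Embedding.induce (G := T) S).injective, hqS⟩

lemma IsAcyclic.length_eq_dist (hT : T.IsAcyclic) {u v : β} {q : T.Walk u v} (hq : q.IsPath) :
    q.length = T.dist u v := by
  obtain ⟨p, hp, hpd⟩ := Reachable.exists_path_of_dist ⟨q⟩
  have hqp : q = p := congrArg Subtype.val ((hT.subsingleton_path u v).elim ⟨q, hq⟩ ⟨p, hp⟩)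
  rw [hqp, hpd]

open Classical in
noncomputable def parent (T : SimpleGraph β) (R₀ a : β) : β :=
  if h : T.Reachable a R₀ then (h.some.toPath : T.Walk a R₀).snd else a

variable {R₀ : β}

lemma IsAcyclic.parent_eq_snd (hT : T.IsAcyclic) {a : β} {q : T.Walk a R₀} (hq : q.IsPath) :
    T.parent R₀ a = q.snd := by
  classical
  have hr : T.Reachable a R₀ := ⟨q⟩
  rw [parent, dif_pos hr, (hT.subsingleton_path a R₀).elim hr.some.toPath ⟨q, hq⟩]

lemma IsAcyclic.parent_root (hT : T.IsAcyclic) : T.parent R₀ R₀ = R₀ :=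
  hT.parent_eq_snd Walk.IsPath.nil

variable (hT : T.IsTree)
include hT

lemma IsTree.dist_parent (a : β) : T.dist (T.parent R₀ a) R₀ = T.dist a R₀ - 1 := by
  obtain ⟨q, hq, -⟩ := (hT.connected.preconnected a R₀).exists_path_of_dist
  rw [hT.isAcyclic.parent_eq_snd hq, ← hT.isAcyclic.length_eq_dist hq,
    ← hT.isAcyclic.length_eq_dist hq.tail, Walk.length_tail]

lemma IsTree.dist_parent_iterate (n : ℕ) (a : β) :
    T.dist ((T.parent R₀)^[n] a) R₀ = T.dist a R₀ - n := by
  induction n with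
  | zero => rfl
  | succ n ih => rw [Function.iterate_succ_apply', hT.dist_parent, ih]; omega

lemma IsTree.parent_eq_or_parent_eq_of_adj {u w : β} (hadj : T.Adj u w) :
    T.parent R₀ u = w ∨ T.parent R₀ w = u := by
  obtain ⟨q, hq, -⟩ := (hT.connected.preconnected u R₀).exists_path_of_dist
  by_cases hw : w ∈ q.support
  · exact Or.inl <| (hT.isAcyclic.parent_eq_snd hq).trans
      (hT.isAcyclic.eq_snd_of_adj_start hq hadj hw).symm
  · exact Or.inr <| (hT.isAcyclic.parent_eq_snd (hq.cons (h := hadj.symm) hw)).trans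
      (Walk.snd_cons _ _)

lemma IsTree.dist_add_length_of_parent_notMem {u b : β} (q : T.Walk u b) (hq : q.IsPath)
    (hu : T.parent R₀ u ∉ q.support) : T.dist u R₀ + q.length = T.dist b R₀ := by
  induction q with
  | nil => rfl
  | @cons u u' b hadj q ih =>
    rw [Walk.cons_isPath_iff] at hq
    have hne : T.parent R₀ u ≠ u' := fun h => hu (by simp [h])
    have hpu' : T.parent R₀ u' = u := (hT.parent_eq_or_parent_eq_of_adj hadj).resolve_left hne
    have hu' : T.dist u' R₀ ≠ 0 := fun h => by
      rw [hT.connected.dist_eq_zero_iff] at h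
      rw [h, hT.isAcyclic.parent_root] at hpu'
      exact hadj.ne (hpu'.symm.trans h.symm)
    have := hT.dist_parent (R₀ := R₀) u'
    rw [hpu'] at this
    rw [Walk.length_cons, ← ih hq.1 (hpu' ▸ hq.2)]
    omega

lemma IsTree.parent_mem_of_dist_le {S : Set β} (hS : (T.induce S).Preconnected) {a b : β}
    (ha : a ∈ S) (hb : b ∈ S) (hab : a ≠ b) (hle : T.dist b R₀ ≤ T.dist a R₀) :
    T.parent R₀ a ∈ S ∧ T.dist (T.parent R₀ a) R₀ < T.dist a R₀ := by
  obtain ⟨q, hq, hqS⟩ := (hS ⟨a, ha⟩ ⟨b, hb⟩).exists_isPath_of_induce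
  have hlen : q.length ≠ 0 := fun h => hab (Walk.eq_of_length_eq_zero h)
  have hpa : T.parent R₀ a ∈ q.support := by
    by_contra hpa
    have := hT.dist_add_length_of_parent_notMem q hq hpa
    omega
  have hda : T.dist a R₀ ≠ 0 := by
    intro h
    have hb0 : T.dist b R₀ = 0 := by omega
    rw [hT.connected.dist_eq_zero_iff] at h hb0
    exact hab (h.trans hb0.symm)
  exact ⟨hqS _ hpa, by rw [hT.dist_parent]; omega⟩

end SimpleGraph

open SimpleGraph

section ParentGraph

variable {α : Type*} {p : α → α} {r : α → ℕ}

def parentGraph (p : α → α) : SimpleGraph α := fromRel fun a b => p a = b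

lemma parent_eq_of_parentGraph_adj (hp : ∀ a, p a = a ∨ r (p a) < r a) {a b : α}
    (hadj : (parentGraph p).Adj a b) (hle : r b ≤ r a) : p a = b := by
  obtain ⟨hab, hpa | hpb⟩ := (fromRel_adj _ a b).mp hadj
  · exact hpa
  · subst hpb
    rcases hp b with h | h
    · exact absurd h hab
    · omega

lemma isAcyclic_parentGraph (hp : ∀ a, p a = a ∨ r (p a) < r a) :
    (parentGraph p).IsAcyclic := by
  classical
  intro v c hc
  obtain ⟨M, hM, hmax⟩ := Set.exists_max_image {w | w ∈ c.support} r
    c.support.finite_toSet ⟨v, c.start_mem_support⟩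
  have hc' := hc.rotate hM
  have hnil := hc'.not_nil
  have parent_eq {w} (hadj : (parentGraph p).Adj M w) (hw : w ∈ (c.rotate M hM).support) :
      p M = w :=
    parent_eq_of_parentGraph_adj hp hadj (hmax w ((c.mem_support_rotate_iff M hM).mp hw))
  exact hc'.snd_ne_penultimate <|
    (parent_eq (Walk.adj_snd hnil) (Walk.getVert_mem_support _ _)).symm.trans
      (parent_eq (Walk.adj_penultimate hnil).symm (Walk.getVert_mem_support _ _))

lemma induce_parentGraph_preconnected (S : Set α)
    (hS : ∀ a ∈ S, ∀ b ∈ S, a ≠ b → r b ≤ r a → p a ∈ S ∧ r (p a) < r a) :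
    ((parentGraph p).induce S).Preconnected := by
  suffices h : ∀ n, ∀ a b (ha : a ∈ S) (hb : b ∈ S), r a + r b < n →
      ((parentGraph p).induce S).Reachable ⟨a, ha⟩ ⟨b, hb⟩ from
    fun ⟨a, ha⟩ ⟨b, hb⟩ => h _ a b ha hb (Nat.lt_succ_self _)
  intro n
  induction n with
  | zero => intros; omega
  | succ n ih =>
    intro a b ha hb hn
    rcases eq_or_ne a b with rfl | hab
    · rfl
    wlog hle : r b ≤ r a generalizing a b
    · exact (this b a hb ha (by omega) hab.symm (by omega)).symm
    obtain ⟨hpa, hlt⟩ := hS a ha b hb hab hle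
    have hadj : ((parentGraph p).induce S).Adj ⟨a, ha⟩ ⟨p a, hpa⟩ :=
      show (parentGraph p).Adj a (p a) from
        (fromRel_adj _ a (p a)).mpr ⟨fun h => by rw [← h] at hlt; omega, Or.inl rfl⟩
    exact hadj.reachable.trans (ih (p a) b hpa hb (by omega))

lemma parentGraph_preconnected (h : ∀ a b, a ≠ b → r b ≤ r a → r (p a) < r a) :
    (parentGraph p).Preconnected :=
  (induceUnivIso _).preconnected_iff.mp <|
    induce_parentGraph_preconnected Set.univ fun a _ b _ hab hle => ⟨trivial, h a b hab hle⟩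

end ParentGraph

theorem alphaAcyclic_of_parent {E : Set (Set V)} (p : E → E) (r : E → ℕ)
    (hp : ∀ a, p a = a ∨ r (p a) < r a)
    (hlt : ∀ a b, a ≠ b → r b ≤ r a → r (p a) < r a)
    (hmem : ∀ v (a b : E), v ∈ (a : Set V) → v ∈ (b : Set V) → a ≠ b → r b ≤ r a →
      v ∈ (p a : Set V)) :
    AlphaAcyclic E :=
  ⟨parentGraph p, isAcyclic_parentGraph hp, parentGraph_preconnected hlt, fun v =>
    induce_parentGraph_preconnected _ fun a ha b hb hab hle =>
      ⟨hmem v a b ha hb hab hle, hlt a b hab hle⟩⟩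

section RemoveVertex

variable {E : Set (Set V)} (T : SimpleGraph E) (R₀ : E) (x : V)

noncomputable def shallowestPreimage (K' : removeVertex E x) : E :=
  Function.argminOn (T.dist · R₀) {K : E | (K : Set V) \ {x} = K'} <| by
    obtain ⟨K, hK, hK', -⟩ := K'.2
    exact ⟨⟨K, hK⟩, hK'.symm⟩

/-- Since `sInf ∅ = 0`, this is `a` itself when no proper ancestor survives; rooting `T` at a
surviving hyperedge rules that out. -/
noncomputable def nearestAncestor (a : E) : E :=
  (T.parent R₀)^[sInf {n | 0 < n ∧ (((T.parent R₀)^[n] a : E) : Set V) \ {x} ≠ ∅}] a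

variable {T R₀ x} {K' L' : removeVertex E x}

lemma diff_shallowestPreimage (K' : removeVertex E x) :
    (shallowestPreimage T R₀ x K' : Set V) \ {x} = K' :=
  Function.argminOn_mem (T.dist · R₀) {K : E | (K : Set V) \ {x} = K'} _

lemma dist_shallowestPreimage_le {K : E} (hK : (K : Set V) \ {x} = K') :
    T.dist (shallowestPreimage T R₀ x K') R₀ ≤ T.dist K R₀ :=
  Function.argminOn_le (T.dist · R₀) {K : E | (K : Set V) \ {x} = K'} hK

lemma shallowestPreimage_injective : Function.Injective (shallowestPreimage T R₀ x) :=
  fun K' L' h => Subtype.ext <| by rw [← diff_shallowestPreimage K', h, diff_shallowestPreimage]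

lemma subset_shallowestPreimage (K' : removeVertex E x) :
    (K' : Set V) ⊆ shallowestPreimage T R₀ x K' := by
  rw [← diff_shallowestPreimage K']
  exact Set.sdiff_subset

lemma nearestAncestor_eq_parent {a : E} (h : ((T.parent R₀ a : E) : Set V) \ {x} ≠ ∅) :
    nearestAncestor T R₀ x a = T.parent R₀ a := by
  have h1 : 1 ∈ {n | 0 < n ∧ (((T.parent R₀)^[n] a : E) : Set V) \ {x} ≠ ∅} := ⟨one_pos, h⟩
  have hpos := (Nat.sInf_mem ⟨1, h1⟩).1
  rw [nearestAncestor, le_antisymm (Nat.sInf_le h1) hpos, Function.iterate_one]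

lemma nearestAncestor_root (hT : T.IsAcyclic) : nearestAncestor T R₀ x R₀ = R₀ :=
  Function.iterate_fixed hT.parent_root _

lemma shallowestPreimage_ne_root (hT : T.Connected) (hKL : K' ≠ L')
    (hle : T.dist (shallowestPreimage T R₀ x L') R₀ ≤ T.dist (shallowestPreimage T R₀ x K') R₀) :
    shallowestPreimage T R₀ x K' ≠ R₀ := by
  intro h
  rw [h, dist_self, Nat.le_zero, hT.dist_eq_zero_iff] at hle
  exact hKL (shallowestPreimage_injective (h.trans hle.symm))

variable (hT : T.IsTree) (hR₀ : (R₀ : Set V) \ {x} ≠ ∅)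
include hT hR₀

lemma exists_parent_iterate_diff_ne_empty (a : E) :
    ∃ n, 0 < n ∧ (((T.parent R₀)^[n] a : E) : Set V) \ {x} ≠ ∅ := by
  refine ⟨T.dist a R₀ + 1, by omega, ?_⟩
  have hroot : (T.parent R₀)^[T.dist a R₀ + 1] a = R₀ := by
    rw [← hT.connected.dist_eq_zero_iff, hT.dist_parent_iterate]
    omega
  rwa [hroot]

lemma nearestAncestor_diff_ne_empty (a : E) :
    (nearestAncestor T R₀ x a : Set V) \ {x} ≠ ∅ :=
  (Nat.sInf_mem (exists_parent_iterate_diff_ne_empty hT hR₀ a)).2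

lemma dist_nearestAncestor_lt {a : E} (ha : a ≠ R₀) :
    T.dist (nearestAncestor T R₀ x a) R₀ < T.dist a R₀ := by
  have hpos := (Nat.sInf_mem (exists_parent_iterate_diff_ne_empty hT hR₀ a)).1
  have hda : T.dist a R₀ ≠ 0 := fun h => ha (hT.connected.dist_eq_zero_iff.mp h)
  have key : ∀ n, 0 < n → T.dist ((T.parent R₀)^[n] a) R₀ < T.dist a R₀ := by
    intro n hn
    rw [hT.dist_parent_iterate]
    omega
  exact key _ hpos

noncomputable def removeVertexParent (K' : removeVertex E x) : removeVertex E x :=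
  ⟨_, _, (nearestAncestor T R₀ x (shallowestPreimage T R₀ x K')).2, rfl,
    nearestAncestor_diff_ne_empty hT hR₀ _⟩

variable {hT hR₀}

lemma removeVertexParent_eq_self (h : shallowestPreimage T R₀ x K' = R₀) :
    removeVertexParent hT hR₀ K' = K' := by
  apply Subtype.ext
  change (nearestAncestor T R₀ x (shallowestPreimage T R₀ x K') : Set V) \ {x} = K'
  rw [h, nearestAncestor_root hT.isAcyclic, ← h, diff_shallowestPreimage]

lemma dist_shallowestPreimage_removeVertexParent_lt (h : shallowestPreimage T R₀ x K' ≠ R₀) :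
    T.dist (shallowestPreimage T R₀ x (removeVertexParent hT hR₀ K')) R₀ <
      T.dist (shallowestPreimage T R₀ x K') R₀ :=
  (dist_shallowestPreimage_le rfl).trans_lt (dist_nearestAncestor_lt hT hR₀ h)

lemma mem_removeVertexParent {v : V} (hjoin : (T.induce {K : E | v ∈ (K : Set V)}).Preconnected)
    (hvK : v ∈ (K' : Set V)) (hvL : v ∈ (L' : Set V)) (hKL : K' ≠ L')
    (hle : T.dist (shallowestPreimage T R₀ x L') R₀ ≤ T.dist (shallowestPreimage T R₀ x K') R₀) :
    v ∈ (removeVertexParent hT hR₀ K' : Set V) := by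
  obtain ⟨hv, -⟩ := hT.parent_mem_of_dist_le hjoin (subset_shallowestPreimage K' hvK)
    (subset_shallowestPreimage L' hvL) (shallowestPreimage_injective.ne hKL) hle
  have hvx : v ≠ x := ((diff_shallowestPreimage (T := T) (R₀ := R₀) K').symm ▸ hvK).2
  have hvp : v ∈ ((T.parent R₀ (shallowestPreimage T R₀ x K') : E) : Set V) \ {x} := ⟨hv, hvx⟩
  change v ∈ (nearestAncestor T R₀ x (shallowestPreimage T R₀ x K') : Set V) \ {x}
  rwa [nearestAncestor_eq_parent (Set.nonempty_iff_ne_empty.mp ⟨v, hvp⟩)]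

end RemoveVertex

theorem alphaAcyclic_removeVertex {E : Set (Set V)} (h : AlphaAcyclic E) (x : V) :
    AlphaAcyclic (removeVertex E x) := by
  obtain ⟨T, hacyc, hpre, hjoin⟩ := h
  obtain hE' | ⟨_, K₀, hK₀, rfl, hK₀x⟩ := (removeVertex E x).eq_empty_or_nonempty
  · rw [hE']
    exact ⟨⊥, isAcyclic_bot, fun a => isEmptyElim a, fun _ a => isEmptyElim a⟩
  set R₀ : E := ⟨K₀, hK₀⟩
  have hT : T.IsTree := ⟨{ preconnected := hpre, nonempty := ⟨R₀⟩ }, hacyc⟩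
  refine alphaAcyclic_of_parent (removeVertexParent (R₀ := R₀) hT hK₀x)
    (fun K' => T.dist (shallowestPreimage T R₀ x K') R₀) (fun K' => ?_)
    (fun K' L' hKL hle => ?_) (fun v K' L' hvK hvL hKL hle => ?_)
  · by_cases h : shallowestPreimage T R₀ x K' = R₀
    · exact Or.inl (removeVertexParent_eq_self h)
    · exact Or.inr (dist_shallowestPreimage_removeVertexParent_lt h)
  · exact dist_shallowestPreimage_removeVertexParent_lt
      (shallowestPreimage_ne_root hT.connected hKL hle)
  · exact mem_removeVertexParent (hjoin v) hvK hvL hKL hle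

lemma removeVertex_union (A B : Set (Set V)) (x : V) :
    removeVertex (A ∪ B) x = removeVertex A x ∪ removeVertex B x := by
  ext K'
  simp only [removeVertex, Set.mem_ofPred_eq, Set.mem_union, or_and_right, exists_or]

lemma exists_subset_removeVertex_eq {E S : Set (Set V)} {x : V} (hS : S ⊆ removeVertex E x) :
    ∃ S₀ ⊆ E, removeVertex S₀ x = S := by
  refine ⟨{K ∈ E | K \ {x} ∈ S}, fun K hK => hK.1, ?_⟩
  ext K'
  constructor
  · rintro ⟨K, ⟨-, hKS⟩, rfl, -⟩
    exact hKS
  · intro hK'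
    obtain ⟨K, hK, rfl, hne⟩ := hS hK'
    exact ⟨K, ⟨hK, hK'⟩, rfl, hne⟩

/-- If a signed hypergraph is signed-acyclic, then removing a vertex `x`
from every (positive and negative) hyperedge preserves signed-acyclicity. -/
theorem signedAcyclic_removeVertex (Ep En : Set (Set V)) (x : V)
    (h : SignedAcyclic Ep En) :
    SignedAcyclic (removeVertex Ep x) (removeVertex En x) := by
  intro S hS
  obtain ⟨S₀, hS₀, rfl⟩ := exists_subset_removeVertex_eq hS
  rw [← removeVertex_union]
  exact alphaAcyclic_removeVertex (h S₀ hS₀) x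
end

section
/- If a signed hypergraph H = (V, E⁺, E⁻) is signed-acyclic, R ∈ E⁺ ∪ E⁻ and S ∈ E⁺ are distinct hyperedges with R ⊆ S, then the signed hypergraph obtained by deleting R from H is also signed-acyclic. -/
/-!
Take a join tree `T` of `E` and the path in `T` from `R` to `S`. By the running intersection
property every vertex of `R` lies in every hyperedge on that path, in particular in the
neighbour `K` of `R` on it. Contracting the tree edge `R – K` yields a join tree of `E \ {R}`:
contracting an edge keeps a tree a tree, and since `R ⊆ K` the nodes containing a given vertex
still span a connected subtree. For the signed statement apply this to `E⁺ ∪ S'` for every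
`S' ⊆ E⁻ \ {R}`; this hypergraph contains `S`, and deleting `R` from it gives `(E⁺ \ {R}) ∪ S'`.
-/

variable {V : Type*}

namespace SimpleGraph

variable {α β : Type*} {G : SimpleGraph α} {f : α → β}

theorem reachable_map_of_reachable (f : α → β) {x y : α} (h : G.Reachable x y) :
    (G.map f).Reachable (f x) (f y) := by
  obtain ⟨p⟩ := h
  induction p with
  | nil => rfl
  | @cons x y _ hxy _ ih =>
    rcases eq_or_ne (f x) (f y) with hf | hf
    · exact hf ▸ ih
    · exact (map_adj_apply' hxy hf).reachable.trans ih

theorem Preconnected.map_of_surjective (hG : G.Preconnected) (hf : Function.Surjective f) :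
    (G.map f).Preconnected :=
  hf.forall₂.2 fun x y => reachable_map_of_reachable f (hG x y)

theorem reachable_of_reachable_map (hf : ∀ x y, f x = f y → G.Reachable x y) {a b : α}
    (h : (G.map f).Reachable (f a) (f b)) : G.Reachable a b := by
  obtain ⟨p⟩ := h
  suffices ∀ {X Y : β} (p : (G.map f).Walk X Y) (a b : α), f a = X → f b = Y → G.Reachable a b
    from this p a b rfl rfl
  intro X Y p
  induction p with
  | nil => exact fun a b ha hb => hf a b (ha.trans hb.symm)
  | cons hadj _ ih =>
    rintro a b rfl rfl
    obtain ⟨-, x, z, hxz, hx, hz⟩ := hadj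
    exact (hf a x hx.symm).trans (hxz.reachable.trans (ih z b hz rfl))

theorem map_deleteEdges_le (f : α → β) (a b : α) :
    (G.map f).deleteEdges {s(f a, f b)} ≤ (G.deleteEdges {s(a, b)}).map f := by
  intro X Y hXY
  rw [deleteEdges_adj, Set.mem_singleton_iff] at hXY
  obtain ⟨⟨hne, x, y, hxy, rfl, rfl⟩, hxy_ne⟩ := hXY
  refine ⟨hne, x, y, deleteEdges_adj.mpr ⟨hxy, fun he => hxy_ne ?_⟩, rfl, rfl⟩
  simpa using congrArg (Sym2.map f) (Set.mem_singleton_iff.mp he)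

/-- An edge of `G.map f` lifts to an edge `ab` of `G`; a detour around it in `G.map f` lifts to a
detour around `ab` in `G`, since the edges collapsed by `f` differ from `ab`. -/
theorem IsAcyclic.map (hG : G.IsAcyclic) (hf : ∀ x y, f x = f y → x = y ∨ G.Adj x y) :
    (G.map f).IsAcyclic := by
  rw [isAcyclic_iff_forall_adj_isBridge] at hG ⊢
  rintro _ _ ⟨hne, a, b, hab, rfl, rfl⟩ hreach
  refine hG hab (reachable_of_reachable_map ?_ (hreach.mono (map_deleteEdges_le f a b)))
  intro x y hxy
  rcases hf x y hxy with rfl | hadj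
  · rfl
  · refine (deleteEdges_adj.mpr ⟨hadj, ?_⟩).reachable
    rintro h
    rcases Sym2.eq_iff.mp h with ⟨rfl, rfl⟩ | ⟨rfl, rfl⟩
    exacts [hne hxy, hne hxy.symm]

end SimpleGraph

open SimpleGraph

section JoinTree

variable {E E' : Set (Set V)} {T : SimpleGraph E}

theorem IsJoinTree.mem_of_mem_support (hT : IsJoinTree E T) {K L M : E} {x : V}
    (hK : x ∈ (K : Set V)) (hL : x ∈ (L : Set V)) {p : T.Walk K L} (hp : p.IsPath)
    (hM : M ∈ p.support) : x ∈ (M : Set V) := by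
  obtain ⟨w⟩ := hT.2.2 x ⟨K, hK⟩ ⟨L, hL⟩
  set w' := w.map (Embedding.induce _).toHom
  have hpw : p = w'.bypass :=
    congrArg Subtype.val ((hT.1.subsingleton_path K L).elim ⟨p, hp⟩ ⟨w'.bypass, w'.bypass_isPath⟩)
  have hM' : M ∈ w'.support := w'.support_bypass_subset_support (hpw ▸ hM)
  rw [Walk.support_map, List.mem_map] at hM'
  obtain ⟨y, -, rfl⟩ := hM'
  exact y.2

theorem IsJoinTree.exists_adj_superset (hT : IsJoinTree E T) {R S : E} (hRS : R ≠ S)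
    (hsub : (R : Set V) ⊆ S) : ∃ K, T.Adj R K ∧ (R : Set V) ⊆ K := by
  obtain ⟨p, hp⟩ := (hT.2.1 R S).exists_isPath
  exact ⟨p.snd, p.adj_snd (Walk.not_nil_of_ne hRS),
    fun x hx => hT.mem_of_mem_support hx (hsub hx) hp (p.getVert_mem_support 1)⟩

theorem IsJoinTree.map (hT : IsJoinTree E T) (f : E → E')
    (hf : ∀ K L : E, f K = f L → K = L ∨ T.Adj K L) (hsub : ∀ K : E, (K : Set V) ⊆ f K)
    (hsec : ∀ A : E', ∃ K : E, f K = A ∧ (A : Set V) ⊆ K) : IsJoinTree E' (T.map f) := by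
  obtain ⟨hac, hconn, hind⟩ := hT
  refine ⟨hac.map hf, hconn.map_of_surjective fun A => (hsec A).imp fun _ => And.left,
    fun v => ?_⟩
  let g : {K : E | v ∈ (K : Set V)} → {A : E' | v ∈ (A : Set V)} := fun K => ⟨f K, hsub K K.2⟩
  have hg : Function.Surjective g := fun A => by
    obtain ⟨K, hK, hAK⟩ := hsec A
    exact ⟨⟨K, hAK A.2⟩, Subtype.ext hK⟩
  refine ((hind v).map_of_surjective hg).mono ?_
  rintro _ _ ⟨hne, K, L, hKL, rfl, rfl⟩
  exact ⟨fun h => hne (Subtype.ext h), K, L, hKL, rfl, rfl⟩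

end JoinTree

theorem AlphaAcyclic.diff_singleton {E : Set (Set V)} {R S : Set V} (hE : AlphaAcyclic E)
    (hS : S ∈ E) (hne : R ≠ S) (hsub : R ⊆ S) : AlphaAcyclic (E \ {R}) := by
  by_cases hR : R ∈ E
  swap
  · rwa [Set.sdiff_singleton_eq_self hR]
  obtain ⟨T, hT⟩ := hE
  set r : E := ⟨R, hR⟩
  obtain ⟨k, hrk, hRk⟩ := hT.exists_adj_superset (R := r) (S := ⟨S, hS⟩)
    (fun h => hne (congrArg Subtype.val h)) hsub
  have hkR : (k : Set V) ∉ ({R} : Set (Set V)) := fun h =>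
    hrk.ne (Subtype.ext (Set.mem_singleton_iff.mp h)).symm
  let f : E → ↥(E \ {R}) := fun K =>
    if hK : K = r then ⟨k, k.2, hkR⟩ else ⟨K, K.2, fun h => hK (Subtype.ext h)⟩
  have hf_val : ∀ K, (f K : Set V) = if K = r then (k : Set V) else K := fun K => by
    simp only [f]
    split_ifs <;> rfl
  refine ⟨T.map f, hT.map f (fun K L hKL => ?_) (fun K => ?_) (fun A => ?_)⟩
  · have hKL' := congrArg Subtype.val hKL
    rw [hf_val, hf_val] at hKL'
    split_ifs at hKL' with hK hL hL
    · exact .inl (hK.trans hL.symm)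
    · exact .inr (hK ▸ (Subtype.ext hKL' : k = L) ▸ hrk)
    · exact .inr (hL ▸ (Subtype.ext hKL' : K = k) ▸ hrk.symm)
    · exact .inl (Subtype.ext hKL')
  · rw [hf_val]
    split_ifs with hK
    exacts [hK ▸ hRk, subset_rfl]
  · have hA : (⟨A, A.2.1⟩ : E) ≠ r := fun h => A.2.2 (congrArg Subtype.val h)
    exact ⟨⟨A, A.2.1⟩, Subtype.ext (by rw [hf_val, if_neg hA]), subset_rfl⟩

theorem signedAcyclic_deleteSubedge_general (Ep En : Set (Set V)) (R S : Set V)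
    (hS : S ∈ Ep) (hne : R ≠ S) (hsub : R ⊆ S)
    (h : SignedAcyclic Ep En) :
    SignedAcyclic (Ep \ {R}) (En \ {R}) := by
  intro S' hS'
  have hRS' : R ∉ S' := fun hR => (hS' hR).2 rfl
  rw [← Set.sdiff_singleton_eq_self hRS', ← Set.union_sdiff_distrib]
  exact (h S' (hS'.trans Set.sdiff_subset)).diff_singleton (Or.inl hS) hne hsub

/-- If a signed hypergraph is signed-acyclic, `R ∈ E⁺ ∪ E⁻` and `S ∈ E⁺` are
distinct hyperedges with `R ⊆ S`, then deleting `R` preserves signed-acyclicity. -/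
theorem signedAcyclic_deleteSubedge (Ep En : Set (Set V)) (R S : Set V)
    (hR : R ∈ Ep ∪ En) (hS : S ∈ Ep) (hne : R ≠ S) (hsub : R ⊆ S)
    (h : SignedAcyclic Ep En) :
    SignedAcyclic (Ep \ {R}) (En \ {R}) :=
  signedAcyclic_deleteSubedge_general Ep En R S hS hne hsub h
end

section
/- The function R(t, k) defined by R(1, k) = 2k, R(t, 0) = 3 for t > 1, and R(t, k) = R(t, k−1) · R(t−1, R(t, k−1)) for k > 0, t > 1, satisfies A(t+2, j) > R(t, j) for all t, j ≥ 1, where A(1, j) = 2^j, A(i, 0) = 2 for i > 1, and A(i, j) = A(i−1, A(i, j−1)) for i > 1, j > 0. -/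
/-- The Ackermann-style function `A` with `A(1, j) = 2^j`, `A(i, 0) = 2` for
`i > 1`, and `A(i, j) = A(i−1, A(i, j−1))` for `i > 1, j > 0`. -/
def Afun : ℕ → ℕ → ℕ
  | 0, _ => 0
  | 1, j => 2 ^ j
  | (_ + 2), 0 => 2
  | (i + 2), (j + 1) => Afun (i + 1) (Afun (i + 2) j)
termination_by i j => (i, j)

/-- The function `R` with `R(1, k) = 2k`, `R(t, 0) = 3` for `t > 1`, and
`R(t, k) = R(t, k−1) · R(t−1, R(t, k−1))` for `t > 1, k > 0`. -/
def Rfun : ℕ → ℕ → ℕ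
  | 0, _ => 0
  | 1, k => 2 * k
  | (_ + 2), 0 => 3
  | (t + 2), (k + 1) => Rfun (t + 2) k * Rfun (t + 1) (Rfun (t + 2) k)
termination_by t k => (t, k)

/-!
The invariant `R(t+1, k) + 2 ≤ A(t+2, k+1)` propagates by induction on `t` and then on `k`.
With `r = R(t+2, k)`, the step bounds `R(t+2, k+1) = r · R(t+1, r)` by
`(r+1) · A(t+2, r+1) < A(t+2, r+2)`, using `A(i+2, j+1) ≥ 2 ^ A(i+2, j)`; the slack `+2` at `k`
gives `r + 2 ≤ A(t+3, k+1)`, so this is at most `A(t+2, A(t+3, k+1)) = A(t+3, k+2)`.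
Finally `A(t+3, j-1) ≥ 2j ≥ j+1` turns the invariant into `R(t+1, j) < A(t+2, j+1) ≤ A(t+3, j)`.
-/

namespace Nat

lemma add_two_le_two_pow {n : ℕ} (hn : 2 ≤ n) : n + 2 ≤ 2 ^ n := by
  induction n, hn using Nat.le_induction with
  | base => norm_num
  | succ n _ ih => rw [pow_succ]; omega

lemma mul_self_le_two_pow {n : ℕ} (hn : 4 ≤ n) : n * n ≤ 2 ^ n := by
  induction n, hn using Nat.le_induction with
  | base => norm_num
  | succ n hn ih => rw [pow_succ]; nlinarith

end Nat

@[simp] lemma Afun_one (j : ℕ) : Afun 1 j = 2 ^ j := by rw [Afun]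

@[simp] lemma Afun_add_two_zero (i : ℕ) : Afun (i + 2) 0 = 2 := by rw [Afun]

lemma Afun_add_two_succ (i j : ℕ) : Afun (i + 2) (j + 1) = Afun (i + 1) (Afun (i + 2) j) := by
  rw [Afun]

@[simp] lemma Rfun_one (k : ℕ) : Rfun 1 k = 2 * k := by rw [Rfun]

@[simp] lemma Rfun_add_two_zero (t : ℕ) : Rfun (t + 2) 0 = 3 := by rw [Rfun]

lemma Rfun_add_two_succ (t k : ℕ) :
    Rfun (t + 2) (k + 1) = Rfun (t + 2) k * Rfun (t + 1) (Rfun (t + 2) k) := by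
  rw [Rfun]

lemma two_pow_le_Afun (i j : ℕ) : 2 ^ j ≤ Afun (i + 1) j := by
  induction i generalizing j with
  | zero => simp
  | succ i ih =>
    induction j with
    | zero => simp
    | succ j ihj =>
      rw [Afun_add_two_succ]
      calc 2 ^ (j + 1) ≤ 2 ^ Afun (i + 2) j :=
            Nat.pow_le_pow_right two_pos ((Nat.lt_two_pow_self).trans_le ihj)
        _ ≤ Afun (i + 1) (Afun (i + 2) j) := ih _

lemma Afun_strictMono (i : ℕ) : StrictMono (Afun (i + 1)) := by
  refine strictMono_nat_of_lt_succ fun j => ?_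
  cases i with
  | zero => simpa using Nat.pow_lt_pow_right one_lt_two (Nat.lt_succ_self j)
  | succ i =>
    rw [Afun_add_two_succ]
    exact Nat.lt_two_pow_self.trans_le (two_pow_le_Afun i _)

lemma two_mul_add_two_le_Afun (i j : ℕ) : 2 * j + 2 ≤ Afun (i + 2) j := by
  induction j with
  | zero => simp
  | succ j ih =>
    rw [Afun_add_two_succ]
    have := Nat.add_two_le_two_pow (n := Afun (i + 2) j) (by omega)
    have := two_pow_le_Afun i (Afun (i + 2) j)
    omega

lemma mul_Afun_lt_Afun_succ (i j : ℕ) : j * Afun (i + 2) j < Afun (i + 2) (j + 1) := by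
  set n := Afun (i + 2) j
  have hn : 2 * j + 2 ≤ n := two_mul_add_two_le_Afun i j
  rw [Afun_add_two_succ]
  rcases Nat.eq_zero_or_pos j with rfl | hj
  · rw [zero_mul]
    exact (Nat.two_pow_pos n).trans_le (two_pow_le_Afun i n)
  calc j * n < n * n := Nat.mul_lt_mul_of_pos_right (by omega) (by omega)
    _ ≤ 2 ^ n := Nat.mul_self_le_two_pow (by omega)
    _ ≤ Afun (i + 1) n := two_pow_le_Afun i n

lemma Rfun_add_one_add_two_le_Afun (t k : ℕ) : Rfun (t + 1) k + 2 ≤ Afun (t + 2) (k + 1) := by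
  induction t generalizing k with
  | zero =>
    have : 2 * (k + 1) + 2 ≤ Afun 2 (k + 1) := two_mul_add_two_le_Afun 0 (k + 1)
    simp only [zero_add, Rfun_one]
    omega
  | succ t ih =>
    induction k with
    | zero =>
      have : 2 * 2 + 2 ≤ Afun (t + 2) 2 := two_mul_add_two_le_Afun t 2
      rw [Rfun_add_two_zero, Afun_add_two_succ, Afun_add_two_zero]
      exact le_trans (by norm_num) this
    | succ k ihk =>
      set r := Rfun (t + 2) k
      have hA : 2 ≤ Afun (t + 2) (r + 1) :=
        le_trans (by omega) (two_mul_add_two_le_Afun t (r + 1))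
      rw [Rfun_add_two_succ, Afun_add_two_succ (t + 1) (k + 1)]
      calc r * Rfun (t + 1) r + 2 ≤ (r + 1) * Afun (t + 2) (r + 1) := by nlinarith [ih r]
        _ ≤ Afun (t + 2) (r + 2) := (mul_Afun_lt_Afun_succ t (r + 1)).le
        _ ≤ Afun (t + 2) (Afun (t + 3) (k + 1)) := (Afun_strictMono (t + 1)).monotone ihk

/-- `A(t+2, j) > R(t, j)` for all `t, j ≥ 1`. -/
theorem Afun_gt_Rfun (t j : ℕ) (ht : 1 ≤ t) (hj : 1 ≤ j) :
    Rfun t j < Afun (t + 2) j := by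
  obtain ⟨s, rfl⟩ : ∃ s, t = s + 1 := ⟨t - 1, by omega⟩
  obtain ⟨i, rfl⟩ : ∃ i, j = i + 1 := ⟨j - 1, by omega⟩
  have hi : i + 2 ≤ Afun (s + 3) i := by
    have : 2 * i + 2 ≤ Afun (s + 3) i := two_mul_add_two_le_Afun (s + 1) i
    omega
  calc Rfun (s + 1) (i + 1) < Afun (s + 2) (i + 2) := by
        have : Rfun (s + 1) (i + 1) + 2 ≤ Afun (s + 2) (i + 2) :=
          Rfun_add_one_add_two_le_Afun s (i + 1)
        omega
    _ ≤ Afun (s + 2) (Afun (s + 3) i) := (Afun_strictMono (s + 1)).monotone hi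
    _ = Afun (s + 3) (i + 1) := (Afun_add_two_succ (s + 1) i).symm
end
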